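/- In a normed BPA system, the branching norm is additive relative to redundant sets: ‖αβ‖_b = ‖β‖_b + ‖α‖_b^{Rd(β)}, where ‖α‖_b^{Rd(β)} denotes the branching norm of α relative to β (which depends only on Rd(β)). -/
import Mathlib


/-- Silent-step closure (⇒): reflexive transitive closure of τ-transitions. -/
def SilentStar {S A : Type*} (trans : S → A → S → Prop) (tau : A) : S → S → Prop :=
  Relation.ReflTransGen (fun p q => trans p tau q)

/-- A symmetric relation is a branching bisimulation. -/
def IsBranchingBisim {S A : Type*} (trans : S → A → S → Prop) (tau : A)
    (R : S → S → Prop) : Prop :=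
  Symmetric R ∧
  ∀ a b a' (l : A), R a b → trans a l a' →
    (l = tau ∧ R a' b) ∨
    ∃ b'' b', SilentStar trans tau b b'' ∧ trans b'' l b' ∧ R a b'' ∧ R a' b'

/-- A symmetric relation is a weak bisimulation. -/
def IsWeakBisim {S A : Type*} (trans : S → A → S → Prop) (tau : A)
    (R : S → S → Prop) : Prop :=
  Symmetric R ∧
  ∀ a b a' (l : A), R a b → trans a l a' →
    (l = tau ∧ R a' b) ∨
    ∃ g1 g2 b', SilentStar trans tau b g1 ∧ trans g1 l g2 ∧
      SilentStar trans tau g2 b' ∧ R a' b'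

/-- Branching bisimilarity: the union of all branching bisimulations. -/
def BrBisim {S A : Type*} (trans : S → A → S → Prop) (tau : A) (a b : S) : Prop :=
  ∃ R, IsBranchingBisim trans tau R ∧ R a b

/-- Weak bisimilarity: the union of all weak bisimulations. -/
def WkBisim {S A : Type*} (trans : S → A → S → Prop) (tau : A) (a b : S) : Prop :=
  ∃ R, IsWeakBisim trans tau R ∧ R a b

/-- One-step transition of a BPA system: X β →λ α β whenever X →λ α is a rule. -/
def BPA.Trans {V A : Type*} (rules : V → A → List V → Prop)
    (p : List V) (l : A) (q : List V) : Prop :=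
  ∃ X α β, p = X :: β ∧ rules X l α ∧ q = α ++ β

/-- A step by some action. -/
def BPA.Step {V A : Type*} (rules : V → A → List V → Prop) (p q : List V) : Prop :=
  ∃ l, BPA.Trans rules p l q

/-- Reachability in a BPA system. -/
def BPA.Reach {V A : Type*} (rules : V → A → List V → Prop) : List V → List V → Prop :=
  Relation.ReflTransGen (BPA.Step rules)

/-- A BPA system is normed if every variable can reach the empty process ε. -/
def BPA.Normed {V A : Type*} (rules : V → A → List V → Prop) : Prop :=
  ∀ X : V, BPA.Reach rules [X] []

/-- The redundant set Rd(α) = { X | Xα ≃ α }. -/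
def BPA.Rd {V A : Type*} (rules : V → A → List V → Prop) (tau : A) (α : List V) : Set V :=
  {X | BrBisim (BPA.Trans rules) tau (X :: α) α}

/-- γ ⇒_{≃} γ' : silent moves between branching bisimilar processes. -/
def SBStar {S A : Type*} (trans : S → A → S → Prop) (tau : A) (p q : S) : Prop :=
  SilentStar trans tau p q ∧ BrBisim trans tau p q

/-- A state-changing step: a visible action, or a silent step to a
non-branching-bisimilar state. -/
def JStep {S A : Type*} (trans : S → A → S → Prop) (tau : A) (p q : S) : Prop :=
  (∃ a, a ≠ tau ∧ trans p a q) ∨ (trans p tau q ∧ ¬ BrBisim trans tau p q)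

/-- `Cost trans tau p q k` : there is a sequence from `p` to `q` alternating
≃-preserving silent phases and state-changing steps, with exactly `k`
state-changing steps. -/
inductive Cost {S A : Type*} (trans : S → A → S → Prop) (tau : A) : S → S → ℕ → Prop
  | zero {p q : S} : SBStar trans tau p q → Cost trans tau p q 0
  | step {p p' p'' q : S} {k : ℕ} : SBStar trans tau p p' → JStep trans tau p' p'' →
      Cost trans tau p'' q k → Cost trans tau p q (k + 1)

/-- The branching norm of α relative to β: minimal number of state-changing
steps to reduce αβ to β. -/
noncomputable def BPA.bnormRel {V A : Type*} (rules : V → A → List V → Prop) (tau : A)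
    (α β : List V) : ℕ :=
  sInf {k | Cost (BPA.Trans rules) tau (α ++ β) β k}

/-- The branching norm of α. -/
noncomputable def BPA.bnorm {V A : Type*} (rules : V → A → List V → Prop) (tau : A)
    (α : List V) : ℕ :=
  BPA.bnormRel rules tau α []


section Aux

variable {S A : Type*} {trans : S → A → S → Prop} {tau : A}

/-- Semi-branching bisimulation (Basten). -/
def IsSemiBr (trans : S → A → S → Prop) (tau : A) (R : S → S → Prop) : Prop :=
  Symmetric R ∧
  ∀ a b a' (l : A), R a b → trans a l a' →
    (l = tau ∧ ∃ b', SilentStar trans tau b b' ∧ R a b' ∧ R a' b') ∨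
    ∃ b'' b', SilentStar trans tau b b'' ∧ trans b'' l b' ∧ R a b'' ∧ R a' b'

/-- Semi-branching bisimilarity. -/
def SemiBisim (trans : S → A → S → Prop) (tau : A) (a b : S) : Prop :=
  ∃ R, IsSemiBr trans tau R ∧ R a b

lemma isSemiBr_eq : IsSemiBr trans tau (fun a b => a = b) := by
  constructor
  · intro a b h; exact h.symm
  · rintro a b a' l rfl ht
    exact Or.inr ⟨a, a', Relation.ReflTransGen.refl, ht, rfl, rfl⟩

lemma semiBisim_refl (a : S) : SemiBisim trans tau a a :=
  ⟨_, isSemiBr_eq, rfl⟩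

lemma semiBisim_symm {a b : S} (h : SemiBisim trans tau a b) : SemiBisim trans tau b a := by
  obtain ⟨R, hR, hab⟩ := h
  exact ⟨R, hR, hR.1 hab⟩

/-- Silent paths are matched by silent paths, for semi-branching bisimulations. -/
lemma IsSemiBr.silent {R : S → S → Prop} (hR : IsSemiBr trans tau R) {b c b1 : S}
    (h : R b c) (hs : SilentStar trans tau b b1) :
    ∃ c1, SilentStar trans tau c c1 ∧ R b1 c1 := by
  induction hs with
  | refl => exact ⟨c, Relation.ReflTransGen.refl, h⟩
  | tail _ hstep ih =>
    obtain ⟨c1, hc1, hrel⟩ := ih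
    rcases hR.2 _ _ _ _ hrel hstep with ⟨_, c2, hs2, _, hrel2⟩ | ⟨c'', c', hs2, ht2, _, hrel2⟩
    · exact ⟨c2, hc1.trans hs2, hrel2⟩
    · exact ⟨c', (hc1.trans hs2).tail ht2, hrel2⟩

lemma semiBisim_isSemiBr : IsSemiBr trans tau (SemiBisim trans tau) := by
  constructor
  · intro a b h; exact semiBisim_symm h
  · rintro a b a' l ⟨R, hR, hab⟩ ht
    rcases hR.2 _ _ _ _ hab ht with ⟨hl, b', hs, h1, h2⟩ | ⟨b'', b', hs, ht', h1, h2⟩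
    · exact Or.inl ⟨hl, b', hs, ⟨R, hR, h1⟩, ⟨R, hR, h2⟩⟩
    · exact Or.inr ⟨b'', b', hs, ht', ⟨R, hR, h1⟩, ⟨R, hR, h2⟩⟩

lemma semiBisim_trans {a b c : S} (hab : SemiBisim trans tau a b)
    (hbc : SemiBisim trans tau b c) : SemiBisim trans tau a c := by
  refine ⟨fun x z => ∃ y, SemiBisim trans tau x y ∧ SemiBisim trans tau y z, ?_, b, hab, hbc⟩
  constructor
  · rintro x z ⟨y, h1, h2⟩
    exact ⟨y, semiBisim_symm h2, semiBisim_symm h1⟩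
  · rintro x z x' l ⟨y, hxy, hyz⟩ ht
    rcases semiBisim_isSemiBr.2 _ _ _ _ hxy ht with
      ⟨hl, y1, hs, h1, h2⟩ | ⟨y1, y2, hs, ht', h1, h2⟩
    · obtain ⟨z1, hz1, hy1z1⟩ := semiBisim_isSemiBr.silent hyz hs
      exact Or.inl ⟨hl, z1, hz1, ⟨y1, h1, hy1z1⟩, ⟨y1, h2, hy1z1⟩⟩
    · obtain ⟨z1, hz1, hy1z1⟩ := semiBisim_isSemiBr.silent hyz hs
      rcases semiBisim_isSemiBr.2 _ _ _ _ hy1z1 ht' with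
        ⟨hl, z2, hs2, h3, h4⟩ | ⟨z2, z3, hs2, ht2, h3, h4⟩
      · exact Or.inl ⟨hl, z2, hz1.trans hs2, ⟨y1, h1, h3⟩, ⟨y2, h2, h4⟩⟩
      · exact Or.inr ⟨z2, z3, hz1.trans hs2, ht2, ⟨y1, h1, h3⟩, ⟨y2, h2, h4⟩⟩

lemma IsBranchingBisim.isSemiBr {R : S → S → Prop}
    (hR : IsBranchingBisim trans tau R) : IsSemiBr trans tau R := by
  refine ⟨hR.1, ?_⟩
  intro a b a' l hab ht
  rcases hR.2 _ _ _ _ hab ht with ⟨hl, h1⟩ | ⟨b'', b', hs, ht', h1, h2⟩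
  · exact Or.inl ⟨hl, b, Relation.ReflTransGen.refl, hab, h1⟩
  · exact Or.inr ⟨b'', b', hs, ht', h1, h2⟩

lemma brBisim_semiBisim {a b : S} (h : BrBisim trans tau a b) : SemiBisim trans tau a b := by
  obtain ⟨R, hR, hab⟩ := h
  exact ⟨R, hR.isSemiBr, hab⟩

lemma semiBisim_isBranching : IsBranchingBisim trans tau (SemiBisim trans tau) := by
  constructor
  · intro a b h; exact semiBisim_symm h
  · intro a b a' l hab ht
    rcases semiBisim_isSemiBr.2 _ _ _ _ hab ht with
      ⟨hl, b', hs, h1, h2⟩ | ⟨b'', b', hs, ht', h1, h2⟩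
    · exact Or.inl ⟨hl, semiBisim_trans h2 (semiBisim_trans (semiBisim_symm h1) hab)⟩
    · exact Or.inr ⟨b'', b', hs, ht', h1, h2⟩

lemma semiBisim_brBisim {a b : S} (h : SemiBisim trans tau a b) : BrBisim trans tau a b :=
  ⟨_, semiBisim_isBranching, h⟩

lemma brBisim_refl (a : S) : BrBisim trans tau a a :=
  semiBisim_brBisim (semiBisim_refl a)

lemma brBisim_symm {a b : S} (h : BrBisim trans tau a b) : BrBisim trans tau b a := by
  obtain ⟨R, hR, hab⟩ := h
  exact ⟨R, hR, hR.1 hab⟩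

lemma brBisim_trans {a b c : S} (h1 : BrBisim trans tau a b) (h2 : BrBisim trans tau b c) :
    BrBisim trans tau a c :=
  semiBisim_brBisim (semiBisim_trans (brBisim_semiBisim h1) (brBisim_semiBisim h2))

/-- The stuttering lemma: intermediate states of a silent path between
branching bisimilar states are branching bisimilar to the endpoints. -/
lemma stutter {p m q : S} (h1 : SilentStar trans tau p m) (h2 : SilentStar trans tau m q)
    (hpq : BrBisim trans tau p q) : BrBisim trans tau p m := by
  have hpq' : SemiBisim trans tau p q := brBisim_semiBisim hpq
  set D := SemiBisim trans tau with hD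
  set Mid : S → Prop := fun x => SilentStar trans tau p x ∧ SilentStar trans tau x q with hMid
  set R : S → S → Prop := fun x y => D x y ∨ (Mid x ∧ D p y) ∨ (Mid y ∧ D p x) with hR
  have hRsb : IsSemiBr trans tau R := by
    constructor
    · rintro x y (h | h | h)
      · exact Or.inl (semiBisim_symm h)
      · exact Or.inr (Or.inr h)
      · exact Or.inr (Or.inl h)
    · rintro a b a' l (hab | ⟨hmid, hpb⟩ | ⟨hmid, hpa⟩) ht
      · rcases semiBisim_isSemiBr.2 _ _ _ _ hab ht with
          ⟨hl, b', hs, hx1, hx2⟩ | ⟨b'', b', hs, ht', hx1, hx2⟩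
        · exact Or.inl ⟨hl, b', hs, Or.inl hx1, Or.inl hx2⟩
        · exact Or.inr ⟨b'', b', hs, ht', Or.inl hx1, Or.inl hx2⟩
      · -- a is on the path, D p b
        obtain ⟨b1, hb1, hab1⟩ := semiBisim_isSemiBr.silent hpb hmid.1
        rcases semiBisim_isSemiBr.2 _ _ _ _ hab1 ht with
          ⟨hl, b2, hs, hx1, hx2⟩ | ⟨b2, b3, hs, ht', hx1, hx2⟩
        · exact Or.inl ⟨hl, b2, hb1.trans hs, Or.inl hx1, Or.inl hx2⟩
        · exact Or.inr ⟨b2, b3, hb1.trans hs, ht', Or.inl hx1, Or.inl hx2⟩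
      · -- b is on the path, D p a
        have haq : D a q := semiBisim_trans (semiBisim_symm hpa) hpq'
        rcases semiBisim_isSemiBr.2 _ _ _ _ haq ht with
          ⟨hl, q1, hs, hx1, hx2⟩ | ⟨q1, q2, hs, ht', hx1, hx2⟩
        · exact Or.inl ⟨hl, q1, hmid.2.trans hs, Or.inl hx1, Or.inl hx2⟩
        · exact Or.inr ⟨q1, q2, hmid.2.trans hs, ht', Or.inl hx1, Or.inl hx2⟩
  have : SemiBisim trans tau p m :=
    ⟨R, hRsb, Or.inr (Or.inr ⟨⟨h1, h2⟩, semiBisim_refl p⟩)⟩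
  exact semiBisim_brBisim this

lemma sbstar_refl (p : S) : SBStar trans tau p p :=
  ⟨Relation.ReflTransGen.refl, brBisim_refl p⟩

lemma sbstar_trans {p q r : S} (h1 : SBStar trans tau p q) (h2 : SBStar trans tau q r) :
    SBStar trans tau p r :=
  ⟨h1.1.trans h2.1, brBisim_trans h1.2 h2.2⟩

lemma cost_sbstar_left {p q r : S} {k : ℕ} (h : SBStar trans tau p q)
    (hc : Cost trans tau q r k) : Cost trans tau p r k := by
  cases hc with
  | zero hs => exact Cost.zero (sbstar_trans h hs)
  | step hs hJ hc => exact Cost.step (sbstar_trans h hs) hJ hc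

lemma cost_trans {p q r : S} {j k : ℕ} (h1 : Cost trans tau p q j)
    (h2 : Cost trans tau q r k) : Cost trans tau p r (j + k) := by
  induction h1 with
  | zero hs => simpa using cost_sbstar_left hs h2
  | step hs hJ _ ih =>
    have : ∀ n, n + 1 + k = n + k + 1 := by omega
    rw [this]
    exact Cost.step hs hJ (ih h2)

end Aux

section BPAAux

variable {V A : Type*} {rules : V → A → List V → Prop} {tau : A}

lemma trans_append {p q : List V} {l : A} (h : BPA.Trans rules p l q) (β : List V) :
    BPA.Trans rules (p ++ β) l (q ++ β) := by
  obtain ⟨X, α, γ, rfl, hr, rfl⟩ := h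
  exact ⟨X, α, γ ++ β, by simp, hr, by simp⟩

lemma reach_append {p q : List V} (h : BPA.Reach rules p q) (β : List V) :
    BPA.Reach rules (p ++ β) (q ++ β) := by
  induction h with
  | refl => exact Relation.ReflTransGen.refl
  | tail _ hstep ih =>
    obtain ⟨l, ht⟩ := hstep
    exact ih.tail ⟨l, trans_append ht β⟩

lemma reach_nil (hn : BPA.Normed rules) : ∀ γ : List V, BPA.Reach rules γ [] := by
  intro γ
  induction γ with
  | nil => exact Relation.ReflTransGen.refl
  | cons X γ ih =>
    have h1 : BPA.Reach rules (X :: γ) γ := reach_append (hn X) γ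
    exact h1.trans ih

open Classical in
lemma reach_cost {p q : List V} (h : BPA.Reach rules p q) :
    ∃ k, Cost (BPA.Trans rules) tau p q k := by
  induction h using Relation.ReflTransGen.head_induction_on with
  | refl => exact ⟨0, Cost.zero (sbstar_refl q)⟩
  | @head a c hstep _ ih =>
    obtain ⟨k, hc⟩ := ih
    obtain ⟨l, ht⟩ := hstep
    by_cases hl : l = tau
    · rw [hl] at ht
      by_cases hb : BrBisim (BPA.Trans rules) tau a c
      · exact ⟨k, cost_sbstar_left ⟨Relation.ReflTransGen.single ht, hb⟩ hc⟩
      · exact ⟨k + 1, Cost.step (sbstar_refl _) (Or.inr ⟨ht, hb⟩) hc⟩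
    · exact ⟨k + 1, Cost.step (sbstar_refl _) (Or.inl ⟨l, hl, ht⟩) hc⟩

lemma trans_suffix {δ β q : List V} {l : A} (hδ : δ ≠ [])
    (h : BPA.Trans rules (δ ++ β) l q) : ∃ δ', q = δ' ++ β := by
  obtain ⟨X, α, γ, he, hr, rfl⟩ := h
  obtain ⟨d, dt, rfl⟩ : ∃ d dt, δ = d :: dt := by
    cases δ with
    | nil => exact absurd rfl hδ
    | cons d dt => exact ⟨d, dt, rfl⟩
  simp only [List.cons_append, List.cons.injEq] at he
  exact ⟨α ++ dt, by rw [← he.2]; simp⟩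

lemma jstep_suffix {δ β q : List V} (hδ : δ ≠ [])
    (h : JStep (BPA.Trans rules) tau (δ ++ β) q) : ∃ δ', q = δ' ++ β := by
  rcases h with ⟨a, _, ht⟩ | ⟨ht, _⟩
  · exact trans_suffix hδ ht
  · exact trans_suffix hδ ht

lemma silent_mid {β q : List V} :
    ∀ {p}, SilentStar (BPA.Trans rules) tau p q → ∀ δ, p = δ ++ β → δ ≠ [] →
      (∃ δ', δ' ≠ [] ∧ q = δ' ++ β) ∨
      (SilentStar (BPA.Trans rules) tau p β ∧ SilentStar (BPA.Trans rules) tau β q) := by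
  intro p h
  induction h using Relation.ReflTransGen.head_induction_on with
  | refl => intro δ hp hδ; exact Or.inl ⟨δ, hδ, hp⟩
  | @head a c hstep hrest ih =>
    rintro δ rfl hδ
    obtain ⟨δ'', rfl⟩ := trans_suffix hδ hstep
    by_cases hδ'' : δ'' = []
    · subst hδ''
      exact Or.inr ⟨Relation.ReflTransGen.single hstep, hrest⟩
    · rcases ih δ'' rfl hδ'' with h | ⟨h1, h2⟩
      · exact Or.inl h
      · exact Or.inr ⟨Relation.ReflTransGen.head hstep h1, h2⟩

lemma cost_split {β : List V} :
    ∀ {p q k}, Cost (BPA.Trans rules) tau p q k → q = [] → ∀ δ, p = δ ++ β → δ ≠ [] →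
      ∃ k1 k2, k1 + k2 = k ∧ Cost (BPA.Trans rules) tau p β k1 ∧
        Cost (BPA.Trans rules) tau β [] k2 := by
  intro p q k h
  induction h with
  | @zero p q hs =>
    rintro rfl δ rfl hδ
    rcases silent_mid hs.1 δ rfl hδ with ⟨δ', hδ', he⟩ | ⟨h1, h2⟩
    · exact absurd he.symm (by simp [hδ'])
    · have hst : BrBisim (BPA.Trans rules) tau (δ ++ β) β := stutter h1 h2 hs.2
      exact ⟨0, 0, rfl, Cost.zero ⟨h1, hst⟩,
        Cost.zero ⟨h2, brBisim_trans (brBisim_symm hst) hs.2⟩⟩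
  | @step p p' p'' q k hs hJ hc ih =>
    rintro rfl δ rfl hδ
    rcases silent_mid hs.1 δ rfl hδ with ⟨δ', hδ', rfl⟩ | ⟨h1, h2⟩
    · obtain ⟨δ'', rfl⟩ := jstep_suffix hδ' hJ
      by_cases hδ'' : δ'' = []
      · subst hδ''
        exact ⟨1, k, by omega, Cost.step hs hJ (Cost.zero (sbstar_refl _)), hc⟩
      · obtain ⟨k1, k2, hsum, c1, c2⟩ := ih rfl δ'' rfl hδ''
        exact ⟨k1 + 1, k2, by omega, Cost.step hs hJ c1, c2⟩
    · have hst : BrBisim (BPA.Trans rules) tau (δ ++ β) β := stutter h1 h2 hs.2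
      refine ⟨0, k + 1, by omega, Cost.zero ⟨h1, hst⟩, ?_⟩
      exact Cost.step ⟨h2, brBisim_trans (brBisim_symm hst) hs.2⟩ hJ hc

end BPAAux

/-- The branching norm is additive: ‖αβ‖_b = ‖β‖_b + ‖α‖_b^{Rd(β)}. -/
theorem bnorm_append {V A : Type*} (rules : V → A → List V → Prop) (tau : A)
    (hn : BPA.Normed rules) (α β : List V) :
    BPA.bnorm rules tau (α ++ β) = BPA.bnorm rules tau β + BPA.bnormRel rules tau α β := by
  classical
  simp only [BPA.bnorm, BPA.bnormRel, List.append_nil]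
  set T := BPA.Trans rules with hT
  have hβ : ∃ k, Cost T tau β [] k := reach_cost (reach_nil hn β)
  have hrel : ∃ k, Cost T tau (α ++ β) β k := by
    have : BPA.Reach rules (α ++ β) β := by
      simpa using reach_append (reach_nil hn α) β
    exact reach_cost this
  have htot : ∃ k, Cost T tau (α ++ β) [] k := by
    obtain ⟨k1, h1⟩ := hrel
    obtain ⟨k2, h2⟩ := hβ
    exact ⟨k1 + k2, cost_trans h1 h2⟩
  have hle : sInf {k | Cost T tau (α ++ β) [] k} ≤
      sInf {k | Cost T tau β [] k} + sInf {k | Cost T tau (α ++ β) β k} := by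
    have h1 : Cost T tau (α ++ β) β (sInf {k | Cost T tau (α ++ β) β k}) := Nat.sInf_mem hrel
    have h2 : Cost T tau β [] (sInf {k | Cost T tau β [] k}) := Nat.sInf_mem hβ
    have := Nat.sInf_le (s := {k | Cost T tau (α ++ β) [] k}) (cost_trans h1 h2)
    omega
  have hge : sInf {k | Cost T tau β [] k} + sInf {k | Cost T tau (α ++ β) β k} ≤
      sInf {k | Cost T tau (α ++ β) [] k} := by
    by_cases hα : α = []
    · subst hα
      have h0 : (0 : ℕ) ∈ {k | Cost T tau ([] ++ β) β k} := Cost.zero (sbstar_refl β)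
      have : sInf {k | Cost T tau ([] ++ β) β k} = 0 := Nat.sInf_eq_zero.2 (Or.inl h0)
      simp only [List.nil_append] at this ⊢
      omega
    · have ht : Cost T tau (α ++ β) [] (sInf {k | Cost T tau (α ++ β) [] k}) :=
        Nat.sInf_mem htot
      obtain ⟨k1, k2, hsum, c1, c2⟩ := cost_split ht rfl α rfl hα
      have h1 := Nat.sInf_le (s := {k | Cost T tau (α ++ β) β k}) c1
      have h2 := Nat.sInf_le (s := {k | Cost T tau β [] k}) c2
      omega
  omega
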